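/- If W_0 → … → W_t is a reduced computation of the S-machine LR(Y) with base Q^{(1)} P P^{-1} (Q^{(1)})^{-1} or (Q^{(2)})^{-1} P^{-1} P Q^{(2)}, and W_0 ≡ q^{(1)} p^{(i)} u (p^{(i)})^{-1} (q^{(1)})^{-1} (i = 1 or 2) or W_0 ≡ (q^{(2)})^{-1} (p^{(i)})^{-1} v p^{(i)} q^{(2)} (i = 1 or 2) for some words u, v, then |W_j|_Y ≥ |W_0|_Y for every j = 0, …, t. -/
import Mathlib


namespace LR

/-- The rules of the `S`-machine `LR(Y)`: `z1 a = ζ⁽¹⁾(a)`, `z12 = ζ⁽¹²⁾` and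
`z2 a = ζ⁽²⁾(a)`.  A signed rule `(r, ε) : LRRule Y × Bool` is the rule `r` if
`ε = true` and its inverse if `ε = false`. -/
inductive LRRule (Y : Type) : Type
  | z1 : Y → LRRule Y
  | z12 : LRRule Y
  | z2 : Y → LRRule Y

/-- An admissible word of `LR(Y)` with base `Q⁽¹⁾ P P⁻¹ (Q⁽¹⁾)⁻¹`, i.e. a word
`q⁽¹⁾ w₁ p⁽ᵃ⁾ w₂ (p⁽ᵇ⁾)⁻¹ w₃ (q⁽¹⁾)⁻¹` (`pa = false` means `p⁽¹⁾`, `pa = true` means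
`p⁽²⁾`), or an admissible word with base `(Q⁽²⁾)⁻¹ P⁻¹ P Q⁽²⁾`, i.e. a word
`(q⁽²⁾)⁻¹ w₁ (p⁽ᵃ⁾)⁻¹ w₂ p⁽ᵇ⁾ w₃ q⁽²⁾`.  Tape words are written in the alphabet of the
corresponding sector, identified with `Y`. -/
structure Config4 (Y : Type) where
  pa : Bool
  pb : Bool
  w1 : FreeGroup Y
  w2 : FreeGroup Y
  w3 : FreeGroup Y

variable {Y : Type}

/-- the `Y`-length of such an admissible word -/
def lenY4 [DecidableEq Y] (W : Config4 Y) : ℕ :=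
  W.w1.toWord.length + W.w2.toWord.length + W.w3.toWord.length

/-- Application of a (signed) rule of `LR(Y)` to an admissible word with base
`Q⁽¹⁾ P P⁻¹ (Q⁽¹⁾)⁻¹` (the rule `ζ⁽¹²⁾` locks the two `Q⁽¹⁾P`-type sectors `w₁`, `w₃`). -/
def StepA (r : LRRule Y × Bool) (W W' : Config4 Y) : Prop :=
  match r with
  | (LRRule.z1 a, true) =>
      W.pa = false ∧ W.pb = false ∧ W'.pa = false ∧ W'.pb = false ∧
      W'.w1 = W.w1 * (FreeGroup.of a)⁻¹ ∧
      W'.w2 = FreeGroup.of a * W.w2 * (FreeGroup.of a)⁻¹ ∧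
      W'.w3 = FreeGroup.of a * W.w3
  | (LRRule.z1 a, false) =>
      W.pa = false ∧ W.pb = false ∧ W'.pa = false ∧ W'.pb = false ∧
      W'.w1 = W.w1 * FreeGroup.of a ∧
      W'.w2 = (FreeGroup.of a)⁻¹ * W.w2 * FreeGroup.of a ∧
      W'.w3 = (FreeGroup.of a)⁻¹ * W.w3
  | (LRRule.z12, true) =>
      W.pa = false ∧ W.pb = false ∧ W.w1 = 1 ∧ W.w3 = 1 ∧
      W'.pa = true ∧ W'.pb = true ∧ W'.w1 = 1 ∧ W'.w3 = 1 ∧ W'.w2 = W.w2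
  | (LRRule.z12, false) =>
      W.pa = true ∧ W.pb = true ∧ W.w1 = 1 ∧ W.w3 = 1 ∧
      W'.pa = false ∧ W'.pb = false ∧ W'.w1 = 1 ∧ W'.w3 = 1 ∧ W'.w2 = W.w2
  | (LRRule.z2 a, true) =>
      W.pa = true ∧ W.pb = true ∧ W'.pa = true ∧ W'.pb = true ∧
      W'.w1 = W.w1 * FreeGroup.of a ∧
      W'.w2 = (FreeGroup.of a)⁻¹ * W.w2 * FreeGroup.of a ∧
      W'.w3 = (FreeGroup.of a)⁻¹ * W.w3
  | (LRRule.z2 a, false) =>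
      W.pa = true ∧ W.pb = true ∧ W'.pa = true ∧ W'.pb = true ∧
      W'.w1 = W.w1 * (FreeGroup.of a)⁻¹ ∧
      W'.w2 = FreeGroup.of a * W.w2 * (FreeGroup.of a)⁻¹ ∧
      W'.w3 = FreeGroup.of a * W.w3

/-- Application of a (signed) rule of `LR(Y)` to an admissible word with base
`(Q⁽²⁾)⁻¹ P⁻¹ P Q⁽²⁾` (the rule `ζ⁽¹²⁾` locks the `Q⁽¹⁾P`-type sector `w₂`). -/
def StepB (r : LRRule Y × Bool) (W W' : Config4 Y) : Prop :=
  match r with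
  | (LRRule.z1 a, true) =>
      W.pa = false ∧ W.pb = false ∧ W'.pa = false ∧ W'.pb = false ∧
      W'.w1 = W.w1 * (FreeGroup.of a)⁻¹ ∧
      W'.w2 = FreeGroup.of a * W.w2 * (FreeGroup.of a)⁻¹ ∧
      W'.w3 = FreeGroup.of a * W.w3
  | (LRRule.z1 a, false) =>
      W.pa = false ∧ W.pb = false ∧ W'.pa = false ∧ W'.pb = false ∧
      W'.w1 = W.w1 * FreeGroup.of a ∧
      W'.w2 = (FreeGroup.of a)⁻¹ * W.w2 * FreeGroup.of a ∧
      W'.w3 = (FreeGroup.of a)⁻¹ * W.w3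
  | (LRRule.z12, true) =>
      W.pa = false ∧ W.pb = false ∧ W.w2 = 1 ∧
      W'.pa = true ∧ W'.pb = true ∧ W'.w2 = 1 ∧ W'.w1 = W.w1 ∧ W'.w3 = W.w3
  | (LRRule.z12, false) =>
      W.pa = true ∧ W.pb = true ∧ W.w2 = 1 ∧
      W'.pa = false ∧ W'.pb = false ∧ W'.w2 = 1 ∧ W'.w1 = W.w1 ∧ W'.w3 = W.w3
  | (LRRule.z2 a, true) =>
      W.pa = true ∧ W.pb = true ∧ W'.pa = true ∧ W'.pb = true ∧
      W'.w1 = W.w1 * FreeGroup.of a ∧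
      W'.w2 = (FreeGroup.of a)⁻¹ * W.w2 * FreeGroup.of a ∧
      W'.w3 = (FreeGroup.of a)⁻¹ * W.w3
  | (LRRule.z2 a, false) =>
      W.pa = true ∧ W.pb = true ∧ W'.pa = true ∧ W'.pb = true ∧
      W'.w1 = W.w1 * (FreeGroup.of a)⁻¹ ∧
      W'.w2 = FreeGroup.of a * W.w2 * (FreeGroup.of a)⁻¹ ∧
      W'.w3 = FreeGroup.of a * W.w3

end LR

open LR in
/-- Lemma `ewe`: if `W₀ → … → W_t` is a reduced computation of `LR(Y)` with base
`Q⁽¹⁾ P P⁻¹ (Q⁽¹⁾)⁻¹` or `(Q⁽²⁾)⁻¹ P⁻¹ P Q⁽²⁾` and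
`W₀ ≡ q⁽¹⁾ p⁽ⁱ⁾ u (p⁽ⁱ⁾)⁻¹ (q⁽¹⁾)⁻¹` (`i = 1, 2`) or
`W₀ ≡ (q⁽²⁾)⁻¹ (p⁽ⁱ⁾)⁻¹ v p⁽ⁱ⁾ q⁽²⁾` (`i = 1, 2`), then `|W_j|_Y ≥ |W₀|_Y` for every
`j = 0, …, t`.  (`hadm` records that the admissible words of the computation are reduced
words.) -/
theorem lr_ewe {Y : Type} [DecidableEq Y]
    (t : ℕ) (W : Fin (t + 1) → Config4 Y) (hist : Fin t → LRRule Y × Bool)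
    (hred : ∀ (i : ℕ) (hi : i + 1 < t),
      hist ⟨i + 1, hi⟩ ≠ ((hist ⟨i, by omega⟩).1, !(hist ⟨i, by omega⟩).2))
    (hadm : ∀ i : Fin (t + 1), (W i).pa = (W i).pb → (W i).w2 ≠ 1)
    (hcase :
      (∀ i : Fin t, StepA (hist i) (W i.castSucc) (W i.succ)) ∨
      (∀ i : Fin t, StepB (hist i) (W i.castSucc) (W i.succ)))
    (h0 : (W 0).pa = (W 0).pb ∧ (W 0).w1 = 1 ∧ (W 0).w3 = 1) :
    ∀ j : Fin (t + 1), lenY4 (W 0) ≤ lenY4 (W j) := by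
  -- Invariant: `w₃ = w₁⁻¹` and `w₂ = w₁⁻¹ · (W 0).w₂ · w₁` throughout.
  have key : ∀ j : Fin (t + 1),
      (W j).w3 = (W j).w1⁻¹ ∧ (W j).w2 = (W j).w1⁻¹ * (W 0).w2 * (W j).w1 := by
    intro j
    induction j using Fin.induction with
    | zero => simp [h0.2.1, h0.2.2]
    | succ i ih =>
      obtain ⟨h3, h2⟩ := ih
      have hs : StepA (hist i) (W i.castSucc) (W i.succ) ∨
          StepB (hist i) (W i.castSucc) (W i.succ) :=
        hcase.elim (fun h => Or.inl (h i)) (fun h => Or.inr (h i))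
      rcases hq : hist i with ⟨a | _ | a, e⟩ <;> rcases e <;>
        rcases hs with h | h <;> rw [hq] at h <;> simp only [StepA, StepB] at h
      · obtain ⟨_, _, _, _, e1, e2, e3⟩ := h
        constructor <;> simp [e1, e2, e3, h3, h2, mul_assoc]
      · obtain ⟨_, _, _, _, e1, e2, e3⟩ := h
        constructor <;> simp [e1, e2, e3, h3, h2, mul_assoc]
      · obtain ⟨_, _, _, _, e1, e2, e3⟩ := h
        constructor <;> simp [e1, e2, e3, h3, h2, mul_assoc]
      · obtain ⟨_, _, _, _, e1, e2, e3⟩ := h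
        constructor <;> simp [e1, e2, e3, h3, h2, mul_assoc]
      · obtain ⟨_, _, f1, f3, _, _, e1, e3, e2⟩ := h
        refine ⟨by simp [e3, e1], ?_⟩
        rw [e2, e1, h2, f1]
      · obtain ⟨_, _, f2, _, _, e2, e1, e3⟩ := h
        refine ⟨by rw [e3, e1, h3], ?_⟩
        rw [e2, e1, ← h2, f2]
      · obtain ⟨_, _, f1, f3, _, _, e1, e3, e2⟩ := h
        refine ⟨by simp [e3, e1], ?_⟩
        rw [e2, e1, h2, f1]
      · obtain ⟨_, _, f2, _, _, e2, e1, e3⟩ := h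
        refine ⟨by rw [e3, e1, h3], ?_⟩
        rw [e2, e1, ← h2, f2]
      · obtain ⟨_, _, _, _, e1, e2, e3⟩ := h
        constructor <;> simp [e1, e2, e3, h3, h2, mul_assoc]
      · obtain ⟨_, _, _, _, e1, e2, e3⟩ := h
        constructor <;> simp [e1, e2, e3, h3, h2, mul_assoc]
      · obtain ⟨_, _, _, _, e1, e2, e3⟩ := h
        constructor <;> simp [e1, e2, e3, h3, h2, mul_assoc]
      · obtain ⟨_, _, _, _, e1, e2, e3⟩ := h
        constructor <;> simp [e1, e2, e3, h3, h2, mul_assoc]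
  intro j
  obtain ⟨h3, h2⟩ := key j
  set g := (W j).w1 with hg
  set u := (W 0).w2 with hu
  have tri : u.norm ≤ g.norm + (g⁻¹ * u * g).norm + g.norm := by
    have : u = g * (g⁻¹ * u * g) * g⁻¹ := by group
    calc u.norm = (g * (g⁻¹ * u * g) * g⁻¹).norm := by rw [← this]
    _ ≤ (g * (g⁻¹ * u * g)).norm + g⁻¹.norm := FreeGroup.norm_mul_le _ _
    _ ≤ g.norm + (g⁻¹ * u * g).norm + g⁻¹.norm :=
        Nat.add_le_add_right (FreeGroup.norm_mul_le _ _) _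
    _ = g.norm + (g⁻¹ * u * g).norm + g.norm := by rw [FreeGroup.norm_inv_eq]
  have hlen0 : lenY4 (W 0) = u.norm := by
    simp [lenY4, h0.2.1, h0.2.2, FreeGroup.norm, ← hu]
  have hlenj : lenY4 (W j) = g.norm + (g⁻¹ * u * g).norm + g.norm := by
    simp only [lenY4, h3, h2, FreeGroup.norm, ← hg, ← hu]
    rw [FreeGroup.toWord_inv, FreeGroup.invRev_length]
  rw [hlen0, hlenj]
  exact tri
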